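/- Let Ω = (-1/2,1/2)×(-L,0), let f(y) = (τ y² + 2τ L y)/4, and let u_y : Ω → ℝ with u_y(x,0) = 0, and ξ : Ω → ℝ be C¹. Define δ = E_h(u,ξ) - B(f) where E_h is the full energy and B(f) = -τ²L³/12 · 1 (width one). Then δ ≥ 0, and moreover ∬_Ω |u_{y,y} + ξ_y²/2 - f'(y)|² dxdy ≤ δ and ∬_{(-1/2,1/2)×(-L/2,0)} ξ_y² dxdy ≤ 8δ/(τL). -/

import Mathlib

open MeasureTheory

/-- Partial derivative in the first variable. -/
noncomputable def pdx (f : ℝ → ℝ → ℝ) (x y : ℝ) : ℝ := deriv (fun s => f s y) x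

/-- Partial derivative in the second variable. -/
noncomputable def pdy (f : ℝ → ℝ → ℝ) (x y : ℝ) : ℝ := deriv (fun t => f x t) y

/-- The Föppl–von Kármán energy (Poisson ratio 0) of the deformation
`(u, ξ)`, `u = (ux, uy)`, on the rectangle `(-W, W) × (-L, 0)`, with
bending coefficient `h` and gravity coefficient `τ`.  The first group of
terms is the squared Frobenius norm of `e(u) + ½ ∇ξ ⊗ ∇ξ`, the second is
`h²` times the squared Frobenius norm of the Hessian of `ξ`, and the last
is the gravitational term. -/
noncomputable def fvkEnergy (h τ W L : ℝ) (ux uy ξ : ℝ → ℝ → ℝ) : ℝ :=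
  ∫ p in (Set.Ioo (-W) W ×ˢ Set.Ioo (-L) (0:ℝ)),
    ((pdx ux p.1 p.2 + (pdx ξ p.1 p.2) ^ 2 / 2) ^ 2
      + (1/2) * (pdy ux p.1 p.2 + pdx uy p.1 p.2
          + pdx ξ p.1 p.2 * pdy ξ p.1 p.2) ^ 2
      + (pdy uy p.1 p.2 + (pdy ξ p.1 p.2) ^ 2 / 2) ^ 2
      + h ^ 2 * ((pdx (pdx ξ) p.1 p.2) ^ 2 + 2 * (pdy (pdx ξ) p.1 p.2) ^ 2
          + (pdy (pdy ξ) p.1 p.2) ^ 2)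
      + τ * uy p.1 p.2)

/-!
Complete the square in the strain `u_{y,y} + ξ_y²/2` around the bulk strain
`f'(y) = τ (y + L) / 2`. Pointwise, the energy density equals `excessDensity` (a sum of squares
plus `f' ξ_y²`, nonnegative since `f' ≥ 0` on `Ω`) plus the null Lagrangian
`τ ∂_y ((y + L) u_y)` minus `f'²`. The null Lagrangian integrates to zero because `u_y = 0`
at `y = 0`, and `∫_Ω f'² = τ² L³ / 12 = -B(f)`, so `δ = ∫_Ω excessDensity`. All three bounds
follow, the last one because `f' ≥ τ L / 4` on `(-L/2, 0)`.
-/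

open Set

section PartialDerivatives

variable {f : ℝ → ℝ → ℝ} {m n : WithTop ℕ∞}

lemma pdx_eq_fderiv (hf : Differentiable ℝ (fun p : ℝ × ℝ => f p.1 p.2)) (x y : ℝ) :
    pdx f x y = fderiv ℝ (fun p : ℝ × ℝ => f p.1 p.2) (x, y) (1, 0) := by
  have := (hf (x, y)).hasFDerivAt.comp_hasDerivAt x
    ((hasDerivAt_id x).prodMk (hasDerivAt_const x y))
  exact this.deriv

lemma pdy_eq_fderiv (hf : Differentiable ℝ (fun p : ℝ × ℝ => f p.1 p.2)) (x y : ℝ) :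
    pdy f x y = fderiv ℝ (fun p : ℝ × ℝ => f p.1 p.2) (x, y) (0, 1) := by
  have := (hf (x, y)).hasFDerivAt.comp_hasDerivAt y
    ((hasDerivAt_const y x).prodMk (hasDerivAt_id y))
  exact this.deriv

lemma ContDiff.pdx (hf : ContDiff ℝ n (fun p : ℝ × ℝ => f p.1 p.2)) (hmn : m + 1 ≤ n) :
    ContDiff ℝ m (fun p : ℝ × ℝ => pdx f p.1 p.2) := by
  simp only [pdx_eq_fderiv (hf.differentiable (zero_lt_one.trans_le (le_add_self.trans hmn)).ne')]
  exact (hf.fderiv_right hmn).clm_apply contDiff_const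

lemma ContDiff.pdy (hf : ContDiff ℝ n (fun p : ℝ × ℝ => f p.1 p.2)) (hmn : m + 1 ≤ n) :
    ContDiff ℝ m (fun p : ℝ × ℝ => pdy f p.1 p.2) := by
  simp only [pdy_eq_fderiv (hf.differentiable (zero_lt_one.trans_le (le_add_self.trans hmn)).ne')]
  exact (hf.fderiv_right hmn).clm_apply contDiff_const

end PartialDerivatives

lemma Continuous.integrableOn_Ioo_prod_Ioo {g : ℝ × ℝ → ℝ} (hg : Continuous g) (a b c d : ℝ) :
    IntegrableOn g (Ioo a b ×ˢ Ioo c d) :=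
  (hg.continuousOn.integrableOn_compact (isCompact_Icc.prod isCompact_Icc)).mono_set
    (prod_mono Ioo_subset_Icc_self Ioo_subset_Icc_self)

lemma integral_Ioo_sub_mul_deriv_add_eq_zero {g : ℝ → ℝ} {a b : ℝ} (hab : a ≤ b)
    (hg : Differentiable ℝ g) (hg' : Continuous (deriv g)) (hgb : g b = 0) :
    ∫ y in Ioo a b, ((y - a) * deriv g y + g y) = 0 := by
  have hderiv : ∀ y ∈ uIcc a b,
      HasDerivAt (fun y => (y - a) * g y) ((y - a) * deriv g y + g y) y := fun y _ => by
    refine (((hasDerivAt_id' y).sub_const a).mul (hg y).hasDerivAt).congr_deriv ?_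
    ring
  have hg_cont := hg.continuous
  have hcont : Continuous fun y => (y - a) * deriv g y + g y := by fun_prop
  rw [← integral_Ioc_eq_integral_Ioo, ← intervalIntegral.integral_of_le hab,
    intervalIntegral.integral_eq_sub_of_hasDerivAt hderiv (hcont.intervalIntegrable a b)]
  simp [hgb]

lemma setIntegral_prod_Ioo_sub_mul_pdy_add_eq_zero {u : ℝ → ℝ → ℝ} {a b : ℝ} (s : Set ℝ)
    (hab : a ≤ b) (hu : ContDiff ℝ 1 (fun p : ℝ × ℝ => u p.1 p.2)) (hub : ∀ x, u x b = 0) :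
    ∫ p in s ×ˢ Ioo a b, ((p.2 - a) * pdy u p.1 p.2 + u p.1 p.2) = 0 := by
  by_cases hint : IntegrableOn (fun p : ℝ × ℝ => (p.2 - a) * pdy u p.1 p.2 + u p.1 p.2)
    (s ×ˢ Ioo a b)
  · have hslice : ∀ x, ∫ y in Ioo a b, ((y - a) * pdy u x y + u x y) = 0 := fun x =>
      integral_Ioo_sub_mul_deriv_add_eq_zero hab
        ((hu.differentiable one_ne_zero).comp (differentiable_const x |>.prodMk differentiable_id))
        ((hu.pdy (m := 0) le_rfl).continuous.comp (continuous_const.prodMk continuous_id))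
        (hub x)
    rw [Measure.volume_eq_prod, setIntegral_prod _ (by rwa [← Measure.volume_eq_prod])]
    simp [hslice]
  · exact integral_undef hint

section BulkStrain

variable {τ L y : ℝ}

noncomputable def bulkStrain (τ L y : ℝ) : ℝ := τ * (y + L) / 2

lemma deriv_bulkProfile (τ L y : ℝ) :
    deriv (fun y : ℝ => (τ * y ^ 2 + 2 * τ * L * y) / 4) y = bulkStrain τ L y := by
  have hderiv : HasDerivAt (fun y : ℝ => (τ * y ^ 2 + 2 * τ * L * y) / 4)
      ((τ * (2 * y) + 2 * τ * L) / 4) y := by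
    simpa using (((hasDerivAt_pow 2 y).const_mul τ).add
      ((hasDerivAt_id' y).const_mul (2 * τ * L))).div_const 4
  rw [hderiv.deriv, bulkStrain]
  ring

@[fun_prop]
lemma continuous_bulkStrain : Continuous (bulkStrain τ L) := by
  unfold bulkStrain
  fun_prop

lemma bulkStrain_nonneg (hτ : 0 ≤ τ) (hy : -L ≤ y) : 0 ≤ bulkStrain τ L y := by
  unfold bulkStrain
  nlinarith

lemma le_bulkStrain (hτ : 0 ≤ τ) (hy : -L / 2 ≤ y) : τ * L / 4 ≤ bulkStrain τ L y := by
  unfold bulkStrain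
  nlinarith

lemma setIntegral_bulkStrain_sq {W : ℝ} (hW : 0 ≤ W) (hL : 0 ≤ L) :
    ∫ p in Ioo (-W) W ×ˢ Ioo (-L) 0, bulkStrain τ L p.2 ^ 2 = 2 * W * (τ ^ 2 * L ^ 3 / 12) := by
  have hprod := setIntegral_prod_mul (μ := volume) (ν := volume) (fun _ => (1 : ℝ))
    (fun y => bulkStrain τ L y ^ 2) (Ioo (-W) W) (Ioo (-L) 0)
  rw [← Measure.volume_eq_prod] at hprod
  simp only [one_mul] at hprod
  have hslice : ∫ y in Ioo (-L) 0, bulkStrain τ L y ^ 2 = τ ^ 2 * L ^ 3 / 12 := by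
    rw [← integral_Ioc_eq_integral_Ioo, ← intervalIntegral.integral_of_le (by linarith)]
    simp only [bulkStrain, div_pow, mul_pow]
    rw [intervalIntegral.integral_div, intervalIntegral.integral_const_mul,
      intervalIntegral.integral_comp_add_right (fun y => y ^ 2)]
    simp
    ring
  rw [hprod, hslice]
  simp only [integral_const, smul_eq_mul, mul_one, measureReal_restrict_apply_univ,
    Real.volume_real_Ioo_of_le (by linarith : -W ≤ W)]
  ring

end BulkStrain

section ExcessEnergy

variable {h τ W L : ℝ} {ux uy ξ : ℝ → ℝ → ℝ}

noncomputable def excessDensity (h τ L : ℝ) (ux uy ξ : ℝ → ℝ → ℝ) (p : ℝ × ℝ) : ℝ :=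
  (pdx ux p.1 p.2 + (pdx ξ p.1 p.2) ^ 2 / 2) ^ 2
    + (1/2) * (pdy ux p.1 p.2 + pdx uy p.1 p.2 + pdx ξ p.1 p.2 * pdy ξ p.1 p.2) ^ 2
    + (pdy uy p.1 p.2 + (pdy ξ p.1 p.2) ^ 2 / 2 - bulkStrain τ L p.2) ^ 2
    + bulkStrain τ L p.2 * (pdy ξ p.1 p.2) ^ 2
    + h ^ 2 * ((pdx (pdx ξ) p.1 p.2) ^ 2 + 2 * (pdy (pdx ξ) p.1 p.2) ^ 2
      + (pdy (pdy ξ) p.1 p.2) ^ 2)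

lemma continuous_excessDensity (hux : ContDiff ℝ 1 (fun p : ℝ × ℝ => ux p.1 p.2))
    (huy : ContDiff ℝ 1 (fun p : ℝ × ℝ => uy p.1 p.2))
    (hξ : ContDiff ℝ 2 (fun p : ℝ × ℝ => ξ p.1 p.2)) :
    Continuous (excessDensity h τ L ux uy ξ) := by
  have hux_x := (hux.pdx (m := 0) le_rfl).continuous
  have hux_y := (hux.pdy (m := 0) le_rfl).continuous
  have huy_x := (huy.pdx (m := 0) le_rfl).continuous
  have huy_y := (huy.pdy (m := 0) le_rfl).continuous
  have hξ_x := (hξ.pdx (m := 0) (by norm_num)).continuous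
  have hξ_y := (hξ.pdy (m := 0) (by norm_num)).continuous
  have hξ_xx := ((hξ.pdx (m := 1) le_rfl).pdx (m := 0) le_rfl).continuous
  have hξ_xy := ((hξ.pdx (m := 1) le_rfl).pdy (m := 0) le_rfl).continuous
  have hξ_yy := ((hξ.pdy (m := 1) le_rfl).pdy (m := 0) le_rfl).continuous
  unfold excessDensity
  fun_prop

lemma fvkEnergy_add_eq_integral_excessDensity (hW : 0 ≤ W) (hL : 0 ≤ L)
    (hux : ContDiff ℝ 1 (fun p : ℝ × ℝ => ux p.1 p.2))
    (huy : ContDiff ℝ 1 (fun p : ℝ × ℝ => uy p.1 p.2))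
    (hξ : ContDiff ℝ 2 (fun p : ℝ × ℝ => ξ p.1 p.2)) (hbc : ∀ x, uy x 0 = 0) :
    fvkEnergy h τ W L ux uy ξ + 2 * W * (τ ^ 2 * L ^ 3 / 12) =
      ∫ p in Ioo (-W) W ×ˢ Ioo (-L) 0, excessDensity h τ L ux uy ξ p := by
  have huy_cont := huy.continuous
  have huy_y := (huy.pdy (m := 0) le_rfl).continuous
  have hdensity := continuous_excessDensity (h := h) (τ := τ) (L := L) hux huy hξ
  have hmeas : MeasurableSet (Ioo (-W) W ×ˢ Ioo (-L) (0 : ℝ)) :=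
    measurableSet_Ioo.prod measurableSet_Ioo
  have hdecomp : fvkEnergy h τ W L ux uy ξ = ∫ p in Ioo (-W) W ×ˢ Ioo (-L) 0,
      (excessDensity h τ L ux uy ξ p + τ * ((p.2 - -L) * pdy uy p.1 p.2 + uy p.1 p.2)
        - bulkStrain τ L p.2 ^ 2) :=
    setIntegral_congr_fun hmeas fun p _ => by
      unfold excessDensity bulkStrain
      ring
  rw [hdecomp, integral_sub, integral_add, integral_const_mul,
    setIntegral_prod_Ioo_sub_mul_pdy_add_eq_zero _ (neg_nonpos.2 hL) huy hbc,
    setIntegral_bulkStrain_sq hW hL]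
  · ring
  all_goals exact Continuous.integrableOn_Ioo_prod_Ioo (by fun_prop) _ _ _ _

lemma sq_add_bulkStrain_mul_sq_le_excessDensity (p : ℝ × ℝ) :
    (pdy uy p.1 p.2 + (pdy ξ p.1 p.2) ^ 2 / 2 - bulkStrain τ L p.2) ^ 2
      + bulkStrain τ L p.2 * (pdy ξ p.1 p.2) ^ 2 ≤ excessDensity h τ L ux uy ξ p := by
  unfold excessDensity
  have : 0 ≤ (pdx ux p.1 p.2 + (pdx ξ p.1 p.2) ^ 2 / 2) ^ 2
      + (1/2) * (pdy ux p.1 p.2 + pdx uy p.1 p.2 + pdx ξ p.1 p.2 * pdy ξ p.1 p.2) ^ 2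
      + h ^ 2 * ((pdx (pdx ξ) p.1 p.2) ^ 2 + 2 * (pdy (pdx ξ) p.1 p.2) ^ 2
        + (pdy (pdy ξ) p.1 p.2) ^ 2) := by positivity
  linarith

lemma setIntegral_sq_add_bulkStrain_mul_sq_le (hW : 0 ≤ W) (hL : 0 ≤ L)
    (hux : ContDiff ℝ 1 (fun p : ℝ × ℝ => ux p.1 p.2))
    (huy : ContDiff ℝ 1 (fun p : ℝ × ℝ => uy p.1 p.2))
    (hξ : ContDiff ℝ 2 (fun p : ℝ × ℝ => ξ p.1 p.2)) (hbc : ∀ x, uy x 0 = 0) :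
    ∫ p in Ioo (-W) W ×ˢ Ioo (-L) 0,
      ((pdy uy p.1 p.2 + (pdy ξ p.1 p.2) ^ 2 / 2 - bulkStrain τ L p.2) ^ 2
        + bulkStrain τ L p.2 * (pdy ξ p.1 p.2) ^ 2)
      ≤ fvkEnergy h τ W L ux uy ξ + 2 * W * (τ ^ 2 * L ^ 3 / 12) := by
  have huy_y := (huy.pdy (m := 0) le_rfl).continuous
  have hξ_y := (hξ.pdy (m := 0) (by norm_num)).continuous
  rw [fvkEnergy_add_eq_integral_excessDensity hW hL hux huy hξ hbc]
  exact setIntegral_mono_on (Continuous.integrableOn_Ioo_prod_Ioo (by fun_prop) _ _ _ _)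
    ((continuous_excessDensity hux huy hξ).integrableOn_Ioo_prod_Ioo _ _ _ _)
    (measurableSet_Ioo.prod measurableSet_Ioo)
    fun p _ => sq_add_bulkStrain_mul_sq_le_excessDensity p

end ExcessEnergy

lemma mul_setIntegral_le_setIntegral_bulkStrain_mul {τ L : ℝ} {g : ℝ × ℝ → ℝ} (hτ : 0 ≤ τ)
    (hL : 0 ≤ L) (hg : Continuous g) (hg0 : ∀ p, 0 ≤ g p) (a b : ℝ) :
    τ * L / 4 * ∫ p in Ioo a b ×ˢ Ioo (-L / 2) 0, g p
      ≤ ∫ p in Ioo a b ×ˢ Ioo (-L) 0, bulkStrain τ L p.2 * g p := by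
  have hweighted : Continuous fun p : ℝ × ℝ => bulkStrain τ L p.2 * g p := by fun_prop
  have hsub : Ioo a b ×ˢ Ioo (-L / 2) 0 ⊆ Ioo a b ×ˢ Ioo (-L) (0 : ℝ) :=
    prod_mono_right (Ioo_subset_Ioo_left (by linarith))
  rw [← integral_const_mul]
  calc ∫ p in Ioo a b ×ˢ Ioo (-L / 2) 0, τ * L / 4 * g p
      ≤ ∫ p in Ioo a b ×ˢ Ioo (-L / 2) 0, bulkStrain τ L p.2 * g p :=
        setIntegral_mono_on (Continuous.integrableOn_Ioo_prod_Ioo (by fun_prop) _ _ _ _)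
          (hweighted.integrableOn_Ioo_prod_Ioo _ _ _ _) (measurableSet_Ioo.prod measurableSet_Ioo)
          fun p hp => mul_le_mul_of_nonneg_right (le_bulkStrain hτ hp.2.1.le) (hg0 p)
    _ ≤ ∫ p in Ioo a b ×ˢ Ioo (-L) 0, bulkStrain τ L p.2 * g p :=
        setIntegral_mono_set (hweighted.integrableOn_Ioo_prod_Ioo _ _ _ _)
          ((ae_restrict_iff' (measurableSet_Ioo.prod measurableSet_Ioo)).2 <|
            .of_forall fun p hp => mul_nonneg (bulkStrain_nonneg hτ hp.2.1.le) (hg0 p))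
          hsub.eventuallyLE

theorem excess_energy_lower_bounds_general (h τ L : ℝ) (hL : 0 < L) (hτ : 0 < τ)
    (ux uy ξ : ℝ → ℝ → ℝ)
    (hux : ContDiff ℝ 2 (fun p : ℝ × ℝ => ux p.1 p.2))
    (huy : ContDiff ℝ 2 (fun p : ℝ × ℝ => uy p.1 p.2))
    (hξ : ContDiff ℝ 3 (fun p : ℝ × ℝ => ξ p.1 p.2))
    (hbc : ∀ x : ℝ, uy x 0 = 0) :
    0 ≤ fvkEnergy h τ (1/2) L ux uy ξ - (-τ^2 * L^3 / 12) ∧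
    (∫ p in (Set.Ioo (-(1/2):ℝ) (1/2) ×ˢ Set.Ioo (-L) (0:ℝ)),
        (pdy uy p.1 p.2 + (pdy ξ p.1 p.2) ^ 2 / 2
          - deriv (fun y : ℝ => (τ * y^2 + 2 * τ * L * y) / 4) p.2) ^ 2) ≤
      fvkEnergy h τ (1/2) L ux uy ξ - (-τ^2 * L^3 / 12) ∧
    (∫ p in (Set.Ioo (-(1/2):ℝ) (1/2) ×ˢ Set.Ioo (-L/2) (0:ℝ)),
        (pdy ξ p.1 p.2) ^ 2) ≤
      8 * (fvkEnergy h τ (1/2) L ux uy ξ - (-τ^2 * L^3 / 12)) / (τ * L) := by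
  have huy_y := (huy.pdy (m := 0) (by norm_num)).continuous
  have hξ_y := (hξ.pdy (m := 0) (by norm_num)).continuous
  have hΩ : MeasurableSet (Ioo (-(1/2) : ℝ) (1/2) ×ˢ Ioo (-L) 0) :=
    measurableSet_Ioo.prod measurableSet_Ioo
  have key := setIntegral_sq_add_bulkStrain_mul_sq_le (h := h) (τ := τ) (W := 1/2)
    (by norm_num) hL.le (hux.of_le (by norm_num)) (huy.of_le (by norm_num))
    (hξ.of_le (by norm_num)) hbc
  rw [integral_add (Continuous.integrableOn_Ioo_prod_Ioo (by fun_prop) _ _ _ _)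
    (Continuous.integrableOn_Ioo_prod_Ioo (by fun_prop) _ _ _ _)] at key
  have hstrain_nonneg : 0 ≤ ∫ p in Ioo (-(1/2) : ℝ) (1/2) ×ˢ Ioo (-L) 0,
      (pdy uy p.1 p.2 + (pdy ξ p.1 p.2) ^ 2 / 2 - bulkStrain τ L p.2) ^ 2 :=
    setIntegral_nonneg hΩ fun _ _ => sq_nonneg _
  have hweighted_nonneg : 0 ≤ ∫ p in Ioo (-(1/2) : ℝ) (1/2) ×ˢ Ioo (-L) 0,
      bulkStrain τ L p.2 * (pdy ξ p.1 p.2) ^ 2 :=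
    setIntegral_nonneg hΩ fun p hp => mul_nonneg (bulkStrain_nonneg hτ.le hp.2.1.le) (sq_nonneg _)
  have hweight := mul_setIntegral_le_setIntegral_bulkStrain_mul hτ.le hL.le (by fun_prop)
    (fun p => sq_nonneg (pdy ξ p.1 p.2)) (-(1/2)) (1/2)
  simp only [deriv_bulkProfile]
  refine ⟨by linarith, by linarith, ?_⟩
  rw [le_div_iff₀ (by positivity)]
  linarith

theorem excess_energy_lower_bounds (h τ L : ℝ) (hL : 0 < L) (hτ : 0 < τ)
    (hτL : 4 ≤ τ * L)
    (ux uy ξ : ℝ → ℝ → ℝ)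
    (hux : ContDiff ℝ 2 (fun p : ℝ × ℝ => ux p.1 p.2))
    (huy : ContDiff ℝ 2 (fun p : ℝ × ℝ => uy p.1 p.2))
    (hξ : ContDiff ℝ 3 (fun p : ℝ × ℝ => ξ p.1 p.2))
    (hbc : ∀ x : ℝ, uy x 0 = 0) :
    0 ≤ fvkEnergy h τ (1/2) L ux uy ξ - (-τ^2 * L^3 / 12) ∧
    (∫ p in (Set.Ioo (-(1/2):ℝ) (1/2) ×ˢ Set.Ioo (-L) (0:ℝ)),
        (pdy uy p.1 p.2 + (pdy ξ p.1 p.2) ^ 2 / 2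
          - deriv (fun y : ℝ => (τ * y^2 + 2 * τ * L * y) / 4) p.2) ^ 2) ≤
      fvkEnergy h τ (1/2) L ux uy ξ - (-τ^2 * L^3 / 12) ∧
    (∫ p in (Set.Ioo (-(1/2):ℝ) (1/2) ×ˢ Set.Ioo (-L/2) (0:ℝ)),
        (pdy ξ p.1 p.2) ^ 2) ≤
      8 * (fvkEnergy h τ (1/2) L ux uy ξ - (-τ^2 * L^3 / 12)) / (τ * L) :=
  excess_energy_lower_bounds_general h τ L hL hτ ux uy ξ hux huy hξ hbc
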